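/- Let f : ℂ → ℂ be holomorphic, let g : D → ℂ be holomorphic on the unit disc, let ρ be holomorphic near q = f(g(p)) with ρ(q) = 0, and suppose (f_n) is a sequence of holomorphic maps converging locally uniformly to f such that ρ∘f_n∘g never vanishes to order less than m at any of its zeros, and ρ∘f∘g does not vanish identically. Then ρ∘f∘g vanishes at p to order at least m. -/

import Mathlib

open Metric

open Set Filter

set_option maxHeartbeats 2000000

lemma min_modulus {H : ℂ → ℂ} {p : ℂ} {s : ℝ} (hs : 0 < s)
    (hd : DifferentiableOn ℂ H (closedBall p s))
    (h0 : ∀ z ∈ closedBall p s, H z ≠ 0) {c : ℝ} (hc : 0 < c)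
    (hsp : ∀ z ∈ sphere p s, c ≤ ‖H z‖) : c ≤ ‖H p‖ := by
  have hcl : closure (ball p s) = closedBall p s := closure_ball p hs.ne'
  have hdc : DiffContOnCl ℂ (fun z => (H z)⁻¹) (ball p s) := by
    refine ⟨(hd.mono ball_subset_closedBall).inv
      (fun x hx => h0 x (ball_subset_closedBall hx)), ?_⟩
    rw [hcl]
    exact hd.continuousOn.inv₀ h0
  have key : ‖(H p)⁻¹‖ ≤ c⁻¹ := by
    refine Complex.norm_le_of_forall_mem_frontier_norm_le isBounded_ball hdc ?_ ?_
    · intro z hz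
      rw [frontier_ball p hs.ne'] at hz
      rw [norm_inv]
      exact inv_anti₀ hc (hsp z hz)
    · rw [hcl]; exact mem_closedBall_self hs.le
  rw [norm_inv] at key
  have hHp : H p ≠ 0 := h0 p (mem_closedBall_self hs.le)
  have hpos : (0:ℝ) < ‖H p‖ := norm_pos_iff.mpr hHp
  calc c = (c⁻¹)⁻¹ := by rw [inv_inv]
    _ ≤ (‖H p‖⁻¹)⁻¹ := inv_anti₀ (by positivity) key
    _ = ‖H p‖ := inv_inv _


/-- Key local step for closedness of orbifold morphisms under locally uniform limits:
if `fₙ → f` locally uniformly, all entire, `g` is holomorphic on the unit disc,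
`ρ` is holomorphic near `q = f (g p)` with `ρ q = 0`, each `ρ ∘ fₙ ∘ g` vanishes to order
at least `m` at each of its zeros, and `ρ ∘ f ∘ g` does not vanish identically,
then `ρ ∘ f ∘ g` vanishes at `p` to order at least `m`. -/
theorem order_of_limit_composition_ge
    (f : ℂ → ℂ) (hf : Differentiable ℂ f)
    (g : ℂ → ℂ) (hg : DifferentiableOn ℂ g (ball (0 : ℂ) 1))
    (p : ℂ) (hp : p ∈ ball (0 : ℂ) 1)
    (ρ : ℂ → ℂ) (U : Set ℂ) (hU : IsOpen U) (hqU : f (g p) ∈ U)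
    (hρ : DifferentiableOn ℂ ρ U) (hρq : ρ (f (g p)) = 0)
    (F : ℕ → ℂ → ℂ) (hF : ∀ n, Differentiable ℂ (F n))
    (hconv : TendstoLocallyUniformly F f Filter.atTop)
    (m : ℕ)
    (horder : ∀ n, ∀ z ∈ ball (0 : ℂ) 1, ∀ ha : AnalyticAt ℂ (fun w => ρ (F n (g w))) z,
      ρ (F n (g z)) = 0 → (m : ℕ∞) ≤ analyticOrderAt (fun w => ρ (F n (g w))) z)
    (ha : AnalyticAt ℂ (fun w => ρ (f (g w))) p)
    (hnotid : analyticOrderAt (fun w => ρ (f (g w))) p ≠ ⊤) :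
    (m : ℕ∞) ≤ analyticOrderAt (fun w => ρ (f (g w))) p := by
  classical
  by_contra hlt
  push_neg at hlt
  set k : ℕ := (analyticOrderAt (fun w => ρ (f (g w))) p).toNat with hk_def
  have hk_eq : analyticOrderAt (fun w => ρ (f (g w))) p = (k : ℕ∞) := (ENat.coe_toNat hnotid).symm
  have hkm : k < m := by
    have := hlt
    rw [hk_eq] at this
    exact_mod_cast this
  -- factorization of the limit
  obtain ⟨φ, hφan, hφ0, hfac⟩ := (ha.analyticOrderAt_eq_natCast (n := k)).mp hk_eq
  set a : ℝ := ‖φ p‖ / 2 with ha_def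
  set b : ℝ := 2 * ‖φ p‖ with hb_def
  have hapos : 0 < a := by have := norm_pos_iff.mpr hφ0; positivity
  have hbpos : 0 < b := by have := norm_pos_iff.mpr hφ0; positivity
  -- the open set where f ∘ g lands in U
  have hcont_fg : ContinuousOn (fun z => f (g z)) (ball (0:ℂ) 1) :=
    hf.continuous.comp_continuousOn hg.continuousOn
  have hVopen : IsOpen (ball (0:ℂ) 1 ∩ (fun z => f (g z)) ⁻¹' U) :=
    hcont_fg.isOpen_inter_preimage isOpen_ball hU
  have hpV : p ∈ ball (0:ℂ) 1 ∩ (fun z => f (g z)) ⁻¹' U := ⟨hp, hqU⟩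
  have hφcont : ∀ᶠ z in nhds p, dist (φ z) (φ p) < ‖φ p‖ / 2 :=
    hφan.continuousAt (Metric.ball_mem_nhds (φ p) (by positivity))
  have hev : ∀ᶠ z in nhds p, (z ∈ ball (0:ℂ) 1 ∧ f (g z) ∈ U) ∧
      ρ (f (g z)) = (z - p) ^ k * φ z ∧ a ≤ ‖φ z‖ ∧ ‖φ z‖ ≤ b := by
    filter_upwards [hVopen.mem_nhds hpV, hfac, hφcont] with z hz1 hz2 hz3
    refine ⟨⟨hz1.1, hz1.2⟩, by simpa [smul_eq_mul] using hz2, ?_, ?_⟩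
    · rw [dist_eq_norm] at hz3
      have := norm_sub_norm_le (φ p) (φ z)
      rw [norm_sub_rev] at this
      have h2 : ‖φ p‖ - ‖φ z‖ < ‖φ p‖ / 2 := lt_of_le_of_lt this hz3
      rw [ha_def]; linarith
    · rw [dist_eq_norm] at hz3
      have := norm_sub_norm_le (φ z) (φ p)
      rw [hb_def]; linarith [lt_of_le_of_lt this hz3]
  rw [Metric.eventually_nhds_iff] at hev
  obtain ⟨r, hrpos, hr⟩ := hev
  set T : ℝ := r / 2 with hT_def
  have hTpos : 0 < T := by positivity
  have hP : ∀ z ∈ closedBall p T, (z ∈ ball (0:ℂ) 1 ∧ f (g z) ∈ U) ∧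
      ρ (f (g z)) = (z - p) ^ k * φ z ∧ a ≤ ‖φ z‖ ∧ ‖φ z‖ ≤ b := by
    intro z hz
    exact hr (lt_of_le_of_lt (mem_closedBall.mp hz) (by linarith))
  set S : ℝ := T / 2 with hS_def
  have hSpos : 0 < S := by positivity
  have hST : S < T := by rw [hS_def]; linarith
  -- compacts and uniform continuity of ρ
  have hsubB : closedBall p T ⊆ ball (0:ℂ) 1 := fun z hz => (hP z hz).1.1
  have hKg : IsCompact (g '' closedBall p T) :=
    (isCompact_closedBall p T).image_of_continuousOn (hg.continuousOn.mono hsubB)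
  have hK' : IsCompact ((fun z => f (g z)) '' closedBall p T) :=
    (isCompact_closedBall p T).image_of_continuousOn (hcont_fg.mono hsubB)
  have hK'U : (fun z => f (g z)) '' closedBall p T ⊆ U := by
    rintro _ ⟨z, hz, rfl⟩; exact (hP z hz).1.2
  obtain ⟨η, hηpos, hηsub⟩ := hK'.exists_cthickening_subset_open hU hK'U
  set W : Set ℂ := cthickening η ((fun z => f (g z)) '' closedBall p T) with hW_def
  have hWU : W ⊆ U := hηsub
  have hWc : IsCompact W := hK'.cthickening
  have hUC : UniformContinuousOn ρ W :=
    hWc.uniformContinuousOn_of_continuous (hρ.continuousOn.mono hWU)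
  -- choice of the small radius t and the approximation error ε
  set D : ℝ := (b * S ^ k + a * S ^ k) / (S / 2) ^ m with hD_def
  have hDpos : 0 < D := by positivity
  set t : ℝ := min S (min 1 (a / (2 ^ (m + 1) * (D + 1)))) with ht_def
  have htpos : 0 < t := by
    refine lt_min hSpos (lt_min one_pos ?_); positivity
  have htS : t ≤ S := min_le_left _ _
  have ht1 : t ≤ 1 := le_trans (min_le_right _ _) (min_le_left _ _)
  have htD : t ≤ a / (2 ^ (m + 1) * (D + 1)) :=
    le_trans (min_le_right _ _) (min_le_right _ _)
  set ε : ℝ := a * (t / 2) ^ k / 4 with hε_def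
  have hεpos : 0 < ε := by positivity
  have hεest : ε ≤ a * t ^ k / 4 := by
    have : (t/2)^k ≤ t^k := pow_le_pow_left₀ (by positivity) (by linarith) k
    rw [hε_def]
    have := mul_le_mul_of_nonneg_left this hapos.le
    linarith
  have hεS : ε ≤ a * S ^ k := by
    have h1 : (t/2)^k ≤ S^k := pow_le_pow_left₀ (by positivity) (by linarith) k
    have := mul_le_mul_of_nonneg_left h1 hapos.le
    rw [hε_def]; nlinarith [pow_nonneg hSpos.le k]
  clear_value a b T S D t ε
  -- key arithmetic inequality
  have harith : (b * S ^ k + ε) / (S / 2) ^ m < (a / 2 * t ^ k) / (2 * t) ^ m := by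
    have h2tm : (0:ℝ) < (2*t)^m := by positivity
    have hC_le_D : (b * S ^ k + ε) / (S / 2) ^ m ≤ D := by
      rw [hD_def]
      gcongr
    refine lt_of_le_of_lt hC_le_D ?_
    rw [lt_div_iff₀ h2tm]
    have hpow_split : (2*t) ^ m = 2 ^ m * (t ^ k * t ^ (m - k)) := by
      rw [mul_pow, ← pow_add, Nat.add_sub_cancel' hkm.le]
    rw [hpow_split]
    have htmk : t ^ (m - k) ≤ t := by
      calc t ^ (m - k) ≤ t ^ 1 :=
            pow_le_pow_of_le_one htpos.le ht1
              (Nat.one_le_iff_ne_zero.mpr (Nat.sub_ne_zero_of_lt hkm))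
        _ = t := pow_one t
    have hkey : D * 2 ^ m * t < a / 2 := by
      have h2 : t * (2 ^ (m+1) * (D + 1)) ≤ a := (le_div_iff₀ (by positivity)).mp htD
      have hpos2 : (0:ℝ) < 2 ^ m * t := by positivity
      have e : (2:ℝ) ^ (m+1) = 2 ^ m * 2 := pow_succ 2 m
      rw [e] at h2
      nlinarith [h2, hpos2]
    calc D * (2 ^ m * (t ^ k * t ^ (m-k)))
        = (D * 2 ^ m * t ^ (m-k)) * t ^ k := by ring
      _ ≤ (D * 2 ^ m * t) * t ^ k := by
          have h5 : D * 2 ^ m * t ^ (m-k) ≤ D * 2 ^ m * t := by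
            have := mul_le_mul_of_nonneg_left htmk (by positivity : (0:ℝ) ≤ D * 2 ^ m)
            linarith
          exact mul_le_mul_of_nonneg_right h5 (by positivity)
      _ < a / 2 * t ^ k := mul_lt_mul_of_pos_right hkey (pow_pos htpos k)
  -- pick δ from uniform continuity
  rw [Metric.uniformContinuousOn_iff] at hUC
  obtain ⟨δ, hδpos, hδ⟩ := hUC ε hεpos
  -- uniform convergence on the compact g '' closedBall p T
  have hTU : TendstoUniformlyOn F f atTop (g '' closedBall p T) :=
    (tendstoLocallyUniformly_iff_forall_isCompact.mp hconv) _ hKg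
  rw [Metric.tendstoUniformlyOn_iff] at hTU
  obtain ⟨n, hn_close⟩ := (hTU (min η δ) (lt_min hηpos hδpos)).exists
  -- properties of the n-th function
  set hfun : ℂ → ℂ := fun w => ρ (F n (g w)) with hfun_def
  have hmemW : ∀ z ∈ closedBall p T, f (g z) ∈ W ∧ F n (g z) ∈ W := by
    intro z hz
    have h1 : f (g z) ∈ (fun z => f (g z)) '' closedBall p T := mem_image_of_mem _ hz
    refine ⟨self_subset_cthickening _ h1, ?_⟩
    have h2 := hn_close (g z) (mem_image_of_mem _ hz)
    rw [dist_comm] at h2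
    have h3 : dist (F n (g z)) (f (g z)) < η := lt_of_lt_of_le h2 (min_le_left _ _)
    exact (thickening_subset_cthickening _ _)
      (mem_thickening_iff.mpr ⟨f (g z), h1, h3⟩)
  have hFnU : ∀ z ∈ closedBall p T, F n (g z) ∈ U := fun z hz => hWU (hmemW z hz).2
  have happrox : ∀ z ∈ closedBall p T, dist (hfun z) (ρ (f (g z))) < ε := by
    intro z hz
    have h2 := hn_close (g z) (mem_image_of_mem _ hz)
    rw [dist_comm] at h2
    exact hδ _ (hmemW z hz).2 _ (hmemW z hz).1
      (lt_of_lt_of_le h2 (min_le_right _ _))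
  -- differentiability of hfun on ball p T
  have hdiff_n : ∀ z ∈ ball p T, DifferentiableAt ℂ hfun z := by
    intro z hz
    have hzT : z ∈ closedBall p T := ball_subset_closedBall hz
    have hz01 : z ∈ ball (0:ℂ) 1 := hsubB hzT
    have hgd : DifferentiableAt ℂ g z :=
      (hg z hz01).differentiableAt (isOpen_ball.mem_nhds hz01)
    have hρd : DifferentiableAt ℂ ρ (F n (g z)) :=
      (hρ (F n (g z)) (hFnU z hzT)).differentiableAt (hU.mem_nhds (hFnU z hzT))
    exact hρd.comp z (((hF n).differentiableAt).comp z hgd)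
  have hdiff_on : DifferentiableOn ℂ hfun (ball p T) :=
    fun z hz => (hdiff_n z hz).differentiableWithinAt
  -- bounds on the limit function on closedBall p T
  have hnorm_h : ∀ z ∈ closedBall p T, ‖ρ (f (g z))‖ = ‖z - p‖ ^ k * ‖φ z‖ := by
    intro z hz
    rw [(hP z hz).2.1, norm_mul, norm_pow]
  -- the test point on the circle of radius t
  set w : ℂ := p + (t : ℂ) with hw_def
  have hwp : ‖w - p‖ = t := by
    rw [hw_def]
    simp [Complex.norm_real, abs_of_pos htpos]
  have hwT : w ∈ closedBall p T := by
    rw [mem_closedBall, dist_eq_norm, hwp]; linarith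
  have hwS : w ∈ closedBall p S := by
    rw [mem_closedBall, dist_eq_norm, hwp]; linarith
  have hw_lower : a * t ^ k - ε ≤ ‖hfun w‖ := by
    have h1 := happrox w hwT
    rw [dist_eq_norm] at h1
    have h2 : ‖ρ (f (g w))‖ - ‖hfun w‖ ≤ ε := by
      have := norm_sub_norm_le (ρ (f (g w))) (hfun w)
      rw [norm_sub_rev] at h1
      linarith
    have h3 : a * t ^ k ≤ ‖ρ (f (g w))‖ := by
      rw [hnorm_h w hwT, hwp]
      calc a * t ^ k ≤ ‖φ w‖ * t ^ k := by
            gcongr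
            exact (hP w hwT).2.2.1
        _ = t ^ k * ‖φ w‖ := by ring
    linarith
  -- main case split: does hfun vanish somewhere in closedBall p (t/2)?
  by_cases hzero : ∃ z₀ ∈ closedBall p (t/2), hfun z₀ = 0
  · -- Case B: there is a zero z₀
    obtain ⟨z₀, hz₀mem, hz₀⟩ := hzero
    have ht2T : closedBall p (t/2) ⊆ ball p T := by
      apply closedBall_subset_ball; linarith
    have hz₀T : z₀ ∈ ball p T := ht2T hz₀mem
    have hz₀cT : z₀ ∈ closedBall p T := ball_subset_closedBall hz₀T
    have hz₀01 : z₀ ∈ ball (0:ℂ) 1 := hsubB hz₀cT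
    have han : AnalyticAt ℂ hfun z₀ :=
      hdiff_on.analyticAt (isOpen_ball.mem_nhds hz₀T)
    have hord := horder n z₀ hz₀01 han hz₀
    have hz₀p : ‖z₀ - p‖ ≤ t / 2 := by
      rw [mem_closedBall, dist_eq_norm] at hz₀mem; exact hz₀mem
    rcases eq_or_ne (analyticOrderAt hfun z₀) ⊤ with htop | hfin
    · -- identically zero near z₀ : contradiction with value at w
      have hzero_nhds : ∀ᶠ z in nhds z₀, hfun z = 0 := analyticOrderAt_eq_top.mp htop
      have hAO : AnalyticOnNhd ℂ hfun (ball p T) := fun z hz =>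
        hdiff_on.analyticAt (isOpen_ball.mem_nhds hz)
      have hEq : EqOn hfun 0 (ball p T) :=
        hAO.eqOn_zero_of_preconnected_of_eventuallyEq_zero
          (convex_ball p T).isPreconnected hz₀T hzero_nhds
      have hwb : w ∈ ball p T := by
        rw [mem_ball, dist_eq_norm, hwp]; linarith
      have : hfun w = 0 := hEq hwb
      rw [this, norm_zero] at hw_lower
      have h9 : a * t ^ k ≤ ε := by linarith
      nlinarith [pow_pos htpos k, hapos, hεest]
    · -- finite order ≥ m
      obtain ⟨kn, hkn⟩ := WithTop.ne_top_iff_exists.mp hfin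
      have hmkn : m ≤ kn := by
        rw [← hkn] at hord; exact Nat.cast_le.mp hord
      obtain ⟨ψ₀, hψan, hψ0, hψfac⟩ := (han.analyticOrderAt_eq_natCast (n := kn)).mp hkn.symm
      set ψ : ℂ → ℂ := fun z => (z - z₀) ^ (kn - m) * ψ₀ z with hψ_def
      have hψ_an : AnalyticAt ℂ ψ z₀ :=
        (((analyticAt_id).sub analyticAt_const).pow _).mul hψan
      have hfacm : ∀ᶠ z in nhds z₀, hfun z = (z - z₀) ^ m * ψ z := by
        filter_upwards [hψfac] with z hz
        rw [hz, smul_eq_mul, hψ_def]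
        rw [← mul_assoc, ← pow_add, Nat.add_sub_cancel' hmkn]
      set Ψ : ℂ → ℂ := fun z => if z = z₀ then ψ z₀ else hfun z / (z - z₀) ^ m with hΨ_def
      have hΨdiff : DifferentiableOn ℂ Ψ (ball p T) := by
        intro z hz
        by_cases hzz : z = z₀
        · subst hzz
          have hEq : Ψ =ᶠ[nhds z] ψ := by
            filter_upwards [hfacm] with v hv
            rw [hΨ_def]
            by_cases hvz : v = z
            · simp [hvz]
            · simp only [if_neg hvz]
              rw [hv]
              field_simp [pow_ne_zero m (sub_ne_zero.mpr hvz)]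
          exact (hψ_an.differentiableAt.congr_of_eventuallyEq
            hEq).differentiableWithinAt
        · have hq : DifferentiableAt ℂ (fun v => hfun v / (v - z₀) ^ m) z := by
            refine (hdiff_n z hz).div ?_ (pow_ne_zero m (sub_ne_zero.mpr hzz))
            exact (differentiableAt_id.sub (differentiableAt_const _)).pow m
          have hEq : Ψ =ᶠ[nhds z] (fun v => hfun v / (v - z₀) ^ m) := by
            filter_upwards [isOpen_ne.mem_nhds hzz] with v hv
            rw [hΨ_def]; simp only [if_neg hv]
          exact (hq.congr_of_eventuallyEq hEq).differentiableWithinAt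
      -- max modulus for Ψ on ball p S
      have hSsub : closedBall p S ⊆ ball p T := closedBall_subset_ball hST
      have hdc : DiffContOnCl ℂ Ψ (ball p S) := by
        refine ⟨hΨdiff.mono (ball_subset_ball hST.le), ?_⟩
        rw [closure_ball p hSpos.ne']
        exact hΨdiff.continuousOn.mono hSsub
      have hΨmax : ‖Ψ w‖ ≤ (b * S ^ k + ε) / (S / 2) ^ m := by
        refine Complex.norm_le_of_forall_mem_frontier_norm_le isBounded_ball hdc ?_ ?_
        · intro z hz
          rw [frontier_ball p hSpos.ne'] at hz
          have hzS : ‖z - p‖ = S := by rwa [mem_sphere_iff_norm] at hz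
          have hzz₀ : z ≠ z₀ := by
            intro hEq
            rw [hEq] at hzS
            have h6 : ‖z₀ - p‖ ≤ t/2 := hz₀p
            rw [hzS] at h6; linarith
          have hzT : z ∈ closedBall p T := by
            rw [mem_closedBall, dist_eq_norm, hzS]; linarith
          have hupper : ‖hfun z‖ ≤ b * S ^ k + ε := by
            have h1 := happrox z hzT
            rw [dist_eq_norm] at h1
            have h2 : ‖hfun z‖ - ‖ρ (f (g z))‖ ≤ ε :=
              le_trans (norm_sub_norm_le _ _) h1.le
            have h3 : ‖ρ (f (g z))‖ ≤ b * S ^ k := by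
              rw [hnorm_h z hzT, hzS]
              calc S ^ k * ‖φ z‖ ≤ S ^ k * b := by
                    gcongr
                    exact (hP z hzT).2.2.2
                _ = b * S ^ k := by ring
            linarith
          have hlow : S / 2 ≤ ‖z - z₀‖ := by
            have h7 := norm_sub_norm_le (z - p) (z₀ - p)
            have heq : (z - p) - (z₀ - p) = z - z₀ := by ring
            rw [heq, hzS] at h7
            linarith
          have hΨz : Ψ z = hfun z / (z - z₀) ^ m := if_neg hzz₀
          rw [hΨz, norm_div, norm_pow]
          exact div_le_div₀ (by positivity) hupper (by positivity)
            (pow_le_pow_left₀ (by positivity) hlow m)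
        · rw [closure_ball p hSpos.ne']; exact hwS
      -- lower bound for ‖Ψ w‖
      have hwz₀ : w ≠ z₀ := by
        intro hEq
        rw [← hEq] at hz₀p
        rw [hwp] at hz₀p; linarith
      have hwz₀dist : ‖w - z₀‖ ≤ 2 * t := by
        have h1 : ‖w - z₀‖ ≤ ‖w - p‖ + ‖p - z₀‖ := by
          have : w - z₀ = (w - p) + (p - z₀) := by ring
          rw [this]; exact norm_add_le _ _
        rw [hwp] at h1
        rw [norm_sub_rev] at hz₀p
        linarith
      have hΨw_lower : (a / 2 * t ^ k) / (2 * t) ^ m ≤ ‖Ψ w‖ := by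
        have hΨw : Ψ w = hfun w / (w - z₀) ^ m := if_neg hwz₀
        rw [hΨw, norm_div, norm_pow]
        have hnum : a / 2 * t ^ k ≤ ‖hfun w‖ := by
          have h8 : (0:ℝ) ≤ a * t ^ k := by positivity
          linarith [hεest, hw_lower]
        have hdenpos : (0:ℝ) < ‖w - z₀‖ := norm_pos_iff.mpr (sub_ne_zero.mpr hwz₀)
        exact div_le_div₀ (norm_nonneg _) hnum (pow_pos hdenpos m)
          (pow_le_pow_left₀ (norm_nonneg _) hwz₀dist m)
      exact absurd harith ((hΨw_lower.trans hΨmax).not_gt)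
  · -- Case A: no zero in closedBall p (t/2)
    push_neg at hzero
    have ht2T : closedBall p (t/2) ⊆ ball p T := by
      apply closedBall_subset_ball; linarith
    have hmm : 3 * ε ≤ ‖hfun p‖ := by
      refine min_modulus (by positivity) (hdiff_on.mono ht2T) hzero (by positivity) ?_
      intro z hz
      have hzT : z ∈ closedBall p T :=
        ball_subset_closedBall (ht2T (sphere_subset_closedBall hz))
      have hzn : ‖z - p‖ = t/2 := by rwa [mem_sphere_iff_norm] at hz
      have h1 := happrox z hzT
      rw [dist_eq_norm] at h1
      have h2 : ‖ρ (f (g z))‖ - ‖hfun z‖ ≤ ε := by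
        have := norm_sub_norm_le (ρ (f (g z))) (hfun z)
        rw [norm_sub_rev] at h1
        linarith
      have h3 : a * (t/2) ^ k ≤ ‖ρ (f (g z))‖ := by
        rw [hnorm_h z hzT, hzn]
        calc a * (t/2) ^ k ≤ ‖φ z‖ * (t/2) ^ k := by
              gcongr
              exact (hP z hzT).2.2.1
          _ = (t/2) ^ k * ‖φ z‖ := by ring
      have h4 : a * (t/2)^k = 4 * ε := by rw [hε_def]; ring
      linarith
    have hpT : p ∈ closedBall p T := mem_closedBall_self hTpos.le
    have h1 := happrox p hpT
    rw [dist_eq_norm, hρq, sub_zero] at h1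
    linarith
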